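/- Let h(z) = 1 + κ|z|², let Ω = {z ∈ ℂ : h(z) > 0}, and let D be the operator (D g)(z) = h(z)² (∂g/∂z)(z). Then for every integer m ≥ 0, every function f smooth on Ω, and every z ∈ Ω, (D^m f)(z) = h(z)^{m+1} · (∂^m/∂z^m)[w ↦ h(w)^{m−1} f(w)](z). -/

import Mathlib

open Complex MeasureTheory Filter

/-- Wirtinger derivative ∂f/∂z = (1/2)(∂f/∂x − i ∂f/∂y). -/
noncomputable def wderiv (f : ℂ → ℂ) (z : ℂ) : ℂ :=
  (fderiv ℝ f z 1 - Complex.I * fderiv ℝ f z Complex.I) / 2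

/-- Anti-holomorphic Wirtinger derivative ∂f/∂z̄ = (1/2)(∂f/∂x + i ∂f/∂y). -/
noncomputable def wderivBar (f : ℂ → ℂ) (z : ℂ) : ℂ :=
  (fderiv ℝ f z 1 + Complex.I * fderiv ℝ f z Complex.I) / 2

/-- Twisted Laplacian L_κ^ν. -/
noncomputable def twistedLap (κ ν : ℝ) (f : ℂ → ℂ) (z : ℂ) : ℂ :=
  -(((1 + κ * Complex.normSq z : ℝ) : ℂ) ^ 2 * wderiv (wderivBar f) z
    + (ν : ℂ) * ((1 + κ * Complex.normSq z : ℝ) : ℂ) *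
        (z * wderiv f z - (starRingEnd ℂ) z * wderivBar f z)
    - (ν : ℂ) ^ 2 * ((Complex.normSq z : ℝ) : ℂ) * f z)

/-- (∇_α f)(z) = −(1+κ|z|²) ∂f/∂z + α z̄ f(z). -/
noncomputable def nabla (κ α : ℝ) (f : ℂ → ℂ) (z : ℂ) : ℂ :=
  -((1 + κ * Complex.normSq z : ℝ) : ℂ) * wderiv f z + (α : ℂ) * (starRingEnd ℂ) z * f z

/-- (∇*_α f)(z) = (1+κ|z|²) ∂f/∂z̄ + (α−κ) z f(z). -/
noncomputable def nablaStar (κ α : ℝ) (f : ℂ → ℂ) (z : ℂ) : ℂ :=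
  ((1 + κ * Complex.normSq z : ℝ) : ℂ) * wderivBar f z + ((α - κ : ℝ) : ℂ) * z * f z

/-- ∇_{ν+κ} ∘ ∇_{ν+2κ} ∘ ⋯ ∘ ∇_{ν+mκ} (the identity when m = 0). -/
noncomputable def nablaChain (κ : ℝ) : ℕ → ℝ → (ℂ → ℂ) → (ℂ → ℂ)
  | 0, _, f => f
  | m + 1, ν, f => nabla κ (ν + κ) (nablaChain κ m (ν + κ) f)

/-- (D g)(z) = (1+κ|z|²)² ∂g/∂z. -/
noncomputable def Dop (κ : ℝ) (g : ℂ → ℂ) (z : ℂ) : ℂ :=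
  ((1 + κ * Complex.normSq z : ℝ) : ℂ) ^ 2 * wderiv g z

/-- Generalized binomial coefficient C(r,k) for real r. -/
noncomputable def genBinom (r : ℝ) (k : ℕ) : ℝ :=
  (∏ i ∈ Finset.range k, (r - i)) / (Nat.factorial k)

/-- Jacobi polynomial P_j^{(a,b)}(x) with real parameters a, b. -/
noncomputable def jacobiP (a b : ℝ) (j : ℕ) (x : ℝ) : ℝ :=
  ∑ s ∈ Finset.range (j + 1),
    genBinom ((j : ℝ) + a) (j - s) * genBinom ((j : ℝ) + b) s *
      ((x - 1) / 2) ^ s * ((x + 1) / 2) ^ (j - s)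

/-- Pochhammer symbol (a)_n = a(a+1)⋯(a+n−1). -/
noncomputable def risingFactorial (a : ℝ) (n : ℕ) : ℝ :=
  ∏ i ∈ Finset.range n, (a + i)

/-!
Write `h = 1 + κ|z|²` and `G_m = h^(m-1) f`. Since `∂h = κ z̄` and `∂z̄ = 0`, multiplication by `h`
satisfies the Leibniz rule `∂^(n+1)(h u) = h ∂^(n+1) u + (n+1) κ z̄ ∂^n u`, whose second term is
exactly what the product rule produces from `∂(h^(m+1))` when `D` is applied to `h^(m+1) ∂^m G_m`.
Hence `D^(m+1) f = h^(m+2) ∂^(m+1) (h G_m) = h^(m+2) ∂^(m+1) G_(m+1)` on `Ω`, and the claim follows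
by induction on `m`.
-/

open Topology
open scoped ContDiff

noncomputable def weight (κ : ℝ) (z : ℂ) : ℂ := ((1 + κ * Complex.normSq z : ℝ) : ℂ)

theorem ContDiffOn.zpow {𝕜 𝕜' E : Type*} [NontriviallyNormedField 𝕜] [NormedField 𝕜']
    [NormedAlgebra 𝕜 𝕜'] [NormedAddCommGroup E] [NormedSpace 𝕜 E] {n : WithTop ℕ∞} {f : E → 𝕜'}
    {s : Set E} (hf : ContDiffOn 𝕜 n f s) (h0 : ∀ x ∈ s, f x ≠ 0) (m : ℤ) :
    ContDiffOn 𝕜 n (fun x => f x ^ m) s := by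
  cases m with
  | ofNat k => simpa using hf.pow k
  | negSucc k =>
    simp only [zpow_negSucc]
    exact (hf.pow (k + 1)).inv fun x hx => pow_ne_zero _ (h0 x hx)

section Wirtinger

variable {f g : ℂ → ℂ} {z : ℂ}

theorem wderiv_congr_of_eventuallyEq (h : f =ᶠ[𝓝 z] g) : wderiv f z = wderiv g z := by
  simp only [wderiv, h.fderiv_eq]

theorem Filter.EventuallyEq.wderiv_iterate (h : f =ᶠ[𝓝 z] g) (n : ℕ) :
    wderiv^[n] f =ᶠ[𝓝 z] wderiv^[n] g := by
  induction n with
  | zero => exact h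
  | succ n ih =>
    simp only [Function.iterate_succ']
    exact ih.eventuallyEq_nhds.mono fun w hw => wderiv_congr_of_eventuallyEq hw

theorem wderiv_const (c : ℂ) : wderiv (fun _ => c) z = 0 := by
  simp [wderiv]

theorem wderiv_id' : wderiv (fun w => w) z = 1 := by
  simp [wderiv, Complex.I_mul_I]

theorem wderiv_conj : wderiv (starRingEnd ℂ) z = 0 := by
  have : fderiv ℝ (starRingEnd ℂ) z = Complex.conjCLE := Complex.conjCLE.fderiv
  simp [wderiv, this, Complex.conj_I]

theorem wderiv_add (hf : DifferentiableAt ℝ f z) (hg : DifferentiableAt ℝ g z) :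
    wderiv (fun w => f w + g w) z = wderiv f z + wderiv g z := by
  simp only [wderiv, fderiv_fun_add hf hg, add_apply]
  ring

theorem wderiv_mul (hf : DifferentiableAt ℝ f z) (hg : DifferentiableAt ℝ g z) :
    wderiv (fun w => f w * g w) z = wderiv f z * g z + f z * wderiv g z := by
  simp only [wderiv, fderiv_fun_mul hf hg, add_apply, smul_apply, smul_eq_mul]
  ring

theorem wderiv_const_mul (c : ℂ) (hg : DifferentiableAt ℝ g z) :
    wderiv (fun w => c * g w) z = c * wderiv g z := by
  rw [wderiv_mul (differentiableAt_const c) hg, wderiv_const]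
  ring

theorem wderiv_pow (hf : DifferentiableAt ℝ f z) (n : ℕ) :
    wderiv (fun w => f w ^ n) z = n * f z ^ (n - 1) * wderiv f z := by
  simp only [wderiv, fderiv_fun_pow n hf, smul_apply, nsmul_eq_mul, smul_eq_mul]
  ring

theorem contDiffOn_wderiv {U : Set ℂ} (hU : IsOpen U) (hf : ContDiffOn ℝ ∞ f U) :
    ContDiffOn ℝ ∞ (wderiv f) U := by
  have hdf : ContDiffOn ℝ ∞ (fderiv ℝ f) U := hf.fderiv_of_isOpen hU (by simp)
  have happly (v : ℂ) : ContDiffOn ℝ ∞ (fun w => fderiv ℝ f w v) U :=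
    (ContinuousLinearMap.apply ℝ ℂ v).contDiff.comp_contDiffOn hdf
  exact ((happly 1).sub (contDiffOn_const.mul (happly Complex.I))).div_const 2

theorem contDiffOn_wderiv_iterate {U : Set ℂ} (hU : IsOpen U) (hf : ContDiffOn ℝ ∞ f U)
    (n : ℕ) : ContDiffOn ℝ ∞ (wderiv^[n] f) U := by
  induction n with
  | zero => exact hf
  | succ n ih =>
    rw [Function.iterate_succ_apply']
    exact contDiffOn_wderiv hU ih

theorem wderiv_iterate_mul_of_wderiv_wderiv_eq_zero {U : Set ℂ} (hU : IsOpen U)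
    (hg : ContDiffOn ℝ ∞ g U) (hg₂ : ∀ w ∈ U, wderiv (wderiv g) w = 0)
    (hf : ContDiffOn ℝ ∞ f U) (n : ℕ) :
    ∀ z ∈ U, wderiv^[n + 1] (fun w => g w * f w) z
      = g z * wderiv^[n + 1] f z + (n + 1) * wderiv g z * wderiv^[n] f z := by
  have hdiff {u : ℂ → ℂ} (hu : ContDiffOn ℝ ∞ u U) {w : ℂ} (hw : w ∈ U) :
      DifferentiableAt ℝ u w :=
    (hu.differentiableOn (by simp)).differentiableAt (hU.mem_nhds hw)
  induction n with
  | zero =>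
    intro z hz
    simp only [zero_add, Function.iterate_one, Function.iterate_zero, id_eq, Nat.cast_zero]
    rw [wderiv_mul (hdiff hg hz) (hdiff hf hz)]
    ring
  | succ n ih =>
    intro z hz
    have hfn := contDiffOn_wderiv_iterate hU hf n
    have hfn₁ := contDiffOn_wderiv_iterate hU hf (n + 1)
    have hdg := hdiff (contDiffOn_wderiv hU hg) hz
    have hlocal : wderiv^[n + 1] (fun w => g w * f w) =ᶠ[𝓝 z]
        fun w => g w * wderiv^[n + 1] f w + (n + 1) * (wderiv g w * wderiv^[n] f w) :=
      eventually_of_mem (hU.mem_nhds hz) fun w hw => by rw [ih w hw]; ring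
    rw [Function.iterate_succ_apply', wderiv_congr_of_eventuallyEq hlocal,
      wderiv_add ((hdiff hg hz).fun_mul (hdiff hfn₁ hz))
        ((differentiableAt_const _).fun_mul (hdg.fun_mul (hdiff hfn hz))),
      wderiv_mul (hdiff hg hz) (hdiff hfn₁ hz),
      wderiv_const_mul _ (hdg.fun_mul (hdiff hfn hz)), wderiv_mul hdg (hdiff hfn hz), hg₂ z hz,
      ← Function.iterate_succ_apply' wderiv (n + 1), ← Function.iterate_succ_apply' wderiv n]
    push_cast
    ring

end Wirtinger

section Weight

theorem weight_eq (κ : ℝ) : weight κ = fun w => 1 + (κ : ℂ) * (w * (starRingEnd ℂ) w) := by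
  funext w
  rw [Complex.mul_conj, weight]
  push_cast
  ring

theorem contDiff_weight (κ : ℝ) : ContDiff ℝ ∞ (weight κ) := by
  rw [weight_eq]
  exact contDiff_const.add (contDiff_const.mul (contDiff_id.mul Complex.conjCLE.contDiff))

theorem wderiv_weight (κ : ℝ) (z : ℂ) : wderiv (weight κ) z = κ * (starRingEnd ℂ) z := by
  have hconj := Complex.differentiable_conj.differentiableAt (x := z)
  have hnormSq : DifferentiableAt ℝ (fun w : ℂ => w * (starRingEnd ℂ) w) z :=
    differentiableAt_fun_id.fun_mul hconj
  rw [weight_eq,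
    wderiv_add (differentiableAt_const 1) ((differentiableAt_const _).fun_mul hnormSq),
    wderiv_const, wderiv_const_mul _ hnormSq, wderiv_mul differentiableAt_fun_id hconj,
    wderiv_id', wderiv_conj]
  ring

theorem wderiv_wderiv_weight (κ : ℝ) (z : ℂ) : wderiv (wderiv (weight κ)) z = 0 := by
  rw [funext (wderiv_weight κ),
    wderiv_const_mul _ Complex.differentiable_conj.differentiableAt, wderiv_conj, mul_zero]

theorem Dop_iterate_eq {κ : ℝ} {f : ℂ → ℂ} {U : Set ℂ} (hU : IsOpen U)
    (hweight : ∀ w ∈ U, weight κ w ≠ 0) (hf : ContDiffOn ℝ ∞ f U) (m : ℕ) :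
    ∀ z ∈ U, (Dop κ)^[m] f z
      = weight κ z ^ (m + 1) * wderiv^[m] (fun w => weight κ w ^ ((m : ℤ) - 1) * f w) z := by
  have hsmooth := (contDiff_weight κ).contDiffOn (s := U)
  have hG (k : ℕ) : ContDiffOn ℝ ∞ (fun w => weight κ w ^ ((k : ℤ) - 1) * f w) U :=
    (hsmooth.zpow hweight _).mul hf
  induction m with
  | zero =>
    intro z hz
    simp [hweight z hz]
  | succ k ih =>
    intro z hz
    set G := fun w => weight κ w ^ ((k : ℤ) - 1) * f w
    have hdG : DifferentiableAt ℝ (wderiv^[k] G) z :=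
      ((contDiffOn_wderiv_iterate hU (hG k) k).differentiableOn (by simp)).differentiableAt
        (hU.mem_nhds hz)
    have hdweight : DifferentiableAt ℝ (weight κ) z :=
      (contDiff_weight κ).differentiable (by simp) z
    have hGsucc : (fun w => weight κ w * G w) =ᶠ[𝓝 z]
        fun w => weight κ w ^ (((k + 1 : ℕ) : ℤ) - 1) * f w :=
      eventually_of_mem (hU.mem_nhds hz) fun w hw => by
        simp only [G, Nat.cast_succ, add_sub_cancel_right, ← mul_assoc,
          ← zpow_one_add₀ (hweight w hw)]
        ring_nf
    calc (Dop κ)^[k + 1] f z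
        = weight κ z ^ 2 * wderiv ((Dop κ)^[k] f) z := by
          rw [Function.iterate_succ_apply']; rfl
      _ = weight κ z ^ 2 * wderiv (fun w => weight κ w ^ (k + 1) * wderiv^[k] G w) z := by
          rw [wderiv_congr_of_eventuallyEq (eventually_of_mem (hU.mem_nhds hz) ih)]
      _ = weight κ z ^ (k + 2) * (weight κ z * wderiv^[k + 1] G z
            + (k + 1) * wderiv (weight κ) z * wderiv^[k] G z) := by
          rw [wderiv_mul (hdweight.fun_pow _) hdG, wderiv_pow hdweight,
            Function.iterate_succ_apply']
          push_cast
          ring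
      _ = weight κ z ^ (k + 1 + 1) * wderiv^[k + 1]
            (fun w => weight κ w ^ (((k + 1 : ℕ) : ℤ) - 1) * f w) z := by
          rw [← wderiv_iterate_mul_of_wderiv_wderiv_eq_zero hU hsmooth
            (fun w _ => wderiv_wderiv_weight κ w) (hG k) k z hz,
            (hGsucc.wderiv_iterate _).eq_of_nhds]

end Weight

theorem stmt7 (κ : ℝ) (m : ℕ) (f : ℂ → ℂ)
    (hf : ContDiffOn ℝ (⊤ : ℕ∞) f {z : ℂ | 0 < 1 + κ * Complex.normSq z})
    (z : ℂ) (hz : 0 < 1 + κ * Complex.normSq z) :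
    (Dop κ)^[m] f z
      = ((1 + κ * Complex.normSq z : ℝ) : ℂ) ^ (m + 1) *
          wderiv^[m]
            (fun w => ((1 + κ * Complex.normSq w : ℝ) : ℂ) ^ ((m : ℤ) - 1) * f w) z := by
  have hΩ : IsOpen {z : ℂ | 0 < 1 + κ * Complex.normSq z} :=
    isOpen_lt continuous_const (continuous_const.add (continuous_const.mul continuous_normSq))
  exact Dop_iterate_eq hΩ (fun w hw => Complex.ofReal_ne_zero.mpr hw.ne') hf m z hz
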